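/- If configurations A and B each satisfy the universal quantifier w.r.t. an edge constraint E, then every combination of A and B satisfies the universal quantifier w.r.t. E. (Combination is sound.) -/

import Mathlib

namespace RoundElim

/-- The configuration (multiset of cardinality `δ`) associated to a function `Fin δ → α`. -/
def ofFn {α : Type*} {δ : ℕ} (f : Fin δ → α) : Multiset α :=
  (List.ofFn f : List α)

variable {σ : Type*} [DecidableEq σ]

/-- `DominatedBy A B` means: configuration `B` dominates configuration `A`. -/
def DominatedBy (A B : Multiset (Finset σ)) : Prop :=
  Multiset.Rel (· ⊆ ·) A B

/-- `StrictlyDominatedBy A B` means: configuration `B` strictly dominates configuration `A`. -/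
def StrictlyDominatedBy (A B : Multiset (Finset σ)) : Prop :=
  DominatedBy A B ∧ ¬ DominatedBy B A

/-- The combination of the representatives `a`, `b` with respect to the permutation `φ`
and the index `u`: union at position `u`, intersection everywhere else. -/
def combineFn {δ : ℕ} (a b : Fin δ → Finset σ) (φ : Equiv.Perm (Fin δ)) (u : Fin δ) :
    Fin δ → Finset σ :=
  fun i => if i = u then a i ∪ b (φ i) else a i ∩ b (φ i)

/-- `C` is a combination of the configurations `A` and `B`. -/
def IsCombination (δ : ℕ) (C A B : Multiset (Finset σ)) : Prop :=
  ∃ (a b : Fin δ → Finset σ) (φ : Equiv.Perm (Fin δ)) (u : Fin δ),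
    ofFn a = A ∧ ofFn b = B ∧ ofFn (combineFn a b φ u) = C

/-- `C` satisfies the universal quantifier w.r.t. the edge constraint `E`. -/
def SatUQ (E : Set (Multiset σ)) (C : Multiset (Finset σ)) : Prop :=
  ∀ M : Multiset σ, Multiset.Rel (· ∈ ·) M C → M ∈ E

/-- A singleton configuration: all its sets have exactly one element. -/
def IsSingletonConfig (C : Multiset (Finset σ)) : Prop :=
  ∀ s ∈ C, s.card = 1

/-- The combination-closure of a set `Γ` of configurations: the smallest set containing `Γ`
and containing every combination of two of its members. -/
inductive CombClosure (δ : ℕ) (Γ : Set (Multiset (Finset σ))) :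
    Multiset (Finset σ) → Prop
  | base {C : Multiset (Finset σ)} : C ∈ Γ → CombClosure δ Γ C
  | comb {A B C : Multiset (Finset σ)} : CombClosure δ Γ A → CombClosure δ Γ B →
      IsCombination δ C A B → CombClosure δ Γ C

/-!
Write `C = ofFn c` with `c i = a i ∩ b (φ i)` for `i ≠ u` and `c u = a u ∪ b (φ u)`. A multiset
related to `C` by `∈` is `ofFn m` with `m i ∈ c i` for all `i`. If `m u ∈ a u`, then `m i ∈ a i`
for every `i`, so `ofFn m` is related to `A`; otherwise `m u ∈ b (φ u)`, so `m i ∈ b (φ i)` for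
every `i` and `ofFn m` is related to `ofFn (b ∘ φ) = B`.
-/

theorem exists_eq_ofFn_of_rel_ofFn {α β : Type*} {r : α → β → Prop} :
    ∀ {n : ℕ} (c : Fin n → β) (M : Multiset α), Multiset.Rel r M (ofFn c) →
      ∃ m : Fin n → α, M = ofFn m ∧ ∀ i, r (m i) (c i)
  | 0, c, M, h => by
    have hc : ofFn c = 0 := by simp [ofFn]
    rw [hc, Multiset.rel_zero_right] at h
    exact ⟨Fin.elim0, by simpa [ofFn] using h, fun i => i.elim0⟩
  | n + 1, c, M, h => by
    have hc : ofFn c = c 0 ::ₘ ofFn (fun i => c i.succ) := by simp [ofFn, List.ofFn_succ]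
    rw [hc, Multiset.rel_cons_right] at h
    obtain ⟨x, M', hx, hM', rfl⟩ := h
    obtain ⟨m, rfl, hm⟩ := exists_eq_ofFn_of_rel_ofFn (fun i => c i.succ) M' hM'
    refine ⟨Fin.cons x m, by simp [ofFn, List.ofFn_succ], Fin.cases ?_ ?_⟩
    · simpa using hx
    · simpa using hm

theorem ofFn_eq_map_finRange {α : Type*} {n : ℕ} (f : Fin n → α) :
    ofFn f = Multiset.map f ↑(List.finRange n) := by
  simp [ofFn, List.ofFn_eq_map]

theorem rel_ofFn_ofFn {α β : Type*} {r : α → β → Prop} {n : ℕ} {f : Fin n → α} {g : Fin n → β}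
    (h : ∀ i, r (f i) (g i)) : Multiset.Rel r (ofFn f) (ofFn g) := by
  rw [ofFn_eq_map_finRange f, ofFn_eq_map_finRange g]
  exact Multiset.rel_map.2 (Multiset.rel_eq_refl.mono fun i _ j _ hij => hij ▸ h i)

theorem ofFn_comp_perm {α : Type*} {n : ℕ} (f : Fin n → α) (φ : Equiv.Perm (Fin n)) :
    ofFn (f ∘ φ) = ofFn f :=
  Quot.sound (φ.ofFn_comp_perm f)

theorem satUQ_ofFn_iff {σ : Type*} [DecidableEq σ] {δ : ℕ} {E : Set (Multiset σ)}
    {c : Fin δ → Finset σ} : SatUQ E (ofFn c) ↔ ∀ m : Fin δ → σ, (∀ i, m i ∈ c i) → ofFn m ∈ E := by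
  refine ⟨fun h m hm => h _ (rel_ofFn_ofFn hm), fun h M hM => ?_⟩
  obtain ⟨m, rfl, hm⟩ := exists_eq_ofFn_of_rel_ofFn c M hM
  exact h m hm

theorem forall_mem_or_forall_mem_of_forall_mem_combineFn {σ : Type*} [DecidableEq σ] {δ : ℕ}
    {a b : Fin δ → Finset σ} {φ : Equiv.Perm (Fin δ)} {u : Fin δ} {m : Fin δ → σ}
    (hm : ∀ i, m i ∈ combineFn a b φ u i) : (∀ i, m i ∈ a i) ∨ ∀ i, m i ∈ b (φ i) := by
  have hoff : ∀ i ≠ u, m i ∈ a i ∧ m i ∈ b (φ i) := fun i hi => by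
    simpa [combineFn, hi] using hm i
  have hu : m u ∈ a u ∨ m u ∈ b (φ u) := by simpa [combineFn] using hm u
  refine hu.imp (fun hau i => ?_) (fun hbu i => ?_) <;> by_cases hi : i = u
  exacts [hi ▸ hau, (hoff i hi).1, hi ▸ hbu, (hoff i hi).2]

theorem combination_sound_general {σ : Type*} [DecidableEq σ] (δ : ℕ)
    (E : Set (Multiset σ)) (A B C : Multiset (Finset σ))
    (hA : SatUQ E A) (hB : SatUQ E B) (hC : IsCombination δ C A B) :
    SatUQ E C := by
  obtain ⟨a, b, φ, u, rfl, rfl, rfl⟩ := hC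
  rw [← ofFn_comp_perm b φ] at hB
  rw [satUQ_ofFn_iff] at hA hB ⊢
  exact fun m hm => (forall_mem_or_forall_mem_of_forall_mem_combineFn hm).elim (hA m) (hB m)

/-- Combination is sound: if configurations `A` and `B` each satisfy the universal quantifier
w.r.t. the edge constraint `E`, then every combination of `A` and `B` satisfies it as well. -/
theorem combination_sound {σ : Type*} [Fintype σ] [DecidableEq σ] (δ : ℕ) (hδ : 0 < δ)
    (E : Set (Multiset σ)) (A B C : Multiset (Finset σ))
    (hA : SatUQ E A) (hB : SatUQ E B) (hC : IsCombination δ C A B) :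
    SatUQ E C :=
  combination_sound_general δ E A B C hA hB hC
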